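/- For a, b in the open unit disk with a ≠ b, the point z = (b(1−|a|²) + a(1−|b|²)) / (1 − |a|²|b|² + |1 − a·conj(b)|·√((1−|a|²)(1−|b|²))) lies in the open unit disk and is the hyperbolic midpoint of a and b: sinh²(ρ(a,z)/2) = sinh²(ρ(z,b)/2), i.e., |a−z|²/((1−|a|²)(1−|z|²)) = |z−b|²/((1−|z|²)(1−|b|²)), where ρ is the hyperbolic metric of the unit disk, and moreover ρ(a,z) = ρ(a,b)/2. -/

import Mathlib

open Complex

/-- The hyperbolic metric of the unit disk. -/
noncomputable def hypDist (x y : ℂ) : ℝ :=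
  2 * Real.arsinh (‖x - y‖ /
    Real.sqrt ((1 - ‖x‖ ^ 2) * (1 - ‖y‖ ^ 2)))

/-!
Put `A = |1 - a b̄|`, `s = √((1 - |a|²)(1 - |b|²))` and `D = 1 - |a|²|b|² + A s`, so that
`z = (b (1 - |a|²) + a (1 - |b|²)) / D`. The Ahlfors bracket identity `A² = |a - b|² + s²` gives
`cosh (ρ(a,b)/2) = A / s`, and expanding the squared norms gives `1 - |z|² = 2 A s / D` and
`|a - z|² = (1 - |a|²) A (A - s) / D`. Hence
`sinh² (ρ(a,z)/2) = (A - s) / (2 s) = (cosh (ρ(a,b)/2) - 1) / 2 = sinh² (ρ(a,b)/4)`,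
and the same holds for `ρ(z,b)` because `z` is symmetric in `a` and `b`.
-/

open ComplexConjugate

theorem Real.sinh_sq_half (t : ℝ) : Real.sinh (t / 2) ^ 2 = (Real.cosh t - 1) / 2 := by
  have h := Real.cosh_two_mul (t / 2)
  rw [mul_div_cancel₀ _ two_ne_zero, Real.cosh_sq] at h
  linarith

theorem norm_one_sub_mul_conj_sq (a b : ℂ) :
    ‖1 - a * conj b‖ ^ 2 = ‖a - b‖ ^ 2 + (1 - ‖a‖ ^ 2) * (1 - ‖b‖ ^ 2) := by
  simp only [Complex.sq_norm, normSq_apply, sub_re, sub_im, mul_re, mul_im, one_re, one_im,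
    conj_re, conj_im]
  ring

theorem sqrt_le_norm_one_sub_mul_conj (a b : ℂ) :
    √((1 - ‖a‖ ^ 2) * (1 - ‖b‖ ^ 2)) ≤ ‖1 - a * conj b‖ :=
  Real.sqrt_le_iff.2 ⟨norm_nonneg _, by
    rw [norm_one_sub_mul_conj_sq]; exact le_add_of_nonneg_left (sq_nonneg _)⟩

theorem one_sub_norm_sq_pos {x : ℂ} (hx : ‖x‖ < 1) : 0 < 1 - ‖x‖ ^ 2 :=
  sub_pos.2 (pow_lt_one₀ (norm_nonneg x) hx two_ne_zero)

theorem hypDist_comm (x y : ℂ) : hypDist x y = hypDist y x := by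
  rw [hypDist, hypDist, norm_sub_rev, mul_comm (1 - ‖x‖ ^ 2)]

theorem hypDist_nonneg (x y : ℂ) : 0 ≤ hypDist x y :=
  mul_nonneg zero_le_two (Real.arsinh_nonneg_iff.2 (by positivity))

theorem sinh_sq_half_hypDist {x y : ℂ} (hx : ‖x‖ < 1) (hy : ‖y‖ < 1) :
    Real.sinh (hypDist x y / 2) ^ 2 = ‖x - y‖ ^ 2 / ((1 - ‖x‖ ^ 2) * (1 - ‖y‖ ^ 2)) := by
  have hxy := mul_pos (one_sub_norm_sq_pos hx) (one_sub_norm_sq_pos hy)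
  rw [hypDist, mul_div_cancel_left₀ _ two_ne_zero, Real.sinh_arsinh, div_pow,
    Real.sq_sqrt hxy.le]

theorem cosh_half_hypDist {x y : ℂ} (hx : ‖x‖ < 1) (hy : ‖y‖ < 1) :
    Real.cosh (hypDist x y / 2) = ‖1 - x * conj y‖ / √((1 - ‖x‖ ^ 2) * (1 - ‖y‖ ^ 2)) := by
  have hxy := mul_pos (one_sub_norm_sq_pos hx) (one_sub_norm_sq_pos hy)
  rw [hypDist, mul_div_cancel_left₀ _ two_ne_zero, Real.cosh_arsinh,
    ← Real.sqrt_sq (by positivity : 0 ≤ ‖1 - x * conj y‖ / √((1 - ‖x‖ ^ 2) * (1 - ‖y‖ ^ 2)))]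
  congr 1
  rw [div_pow, div_pow, Real.sq_sqrt hxy.le, norm_one_sub_mul_conj_sq, add_div,
    div_self hxy.ne', add_comm]

noncomputable def hypMidpointNum (a b : ℂ) : ℂ :=
  b * (1 - (‖a‖ ^ 2 : ℝ)) + a * (1 - (‖b‖ ^ 2 : ℝ))

theorem norm_hypMidpointNum_sq (a b : ℂ) :
    ‖hypMidpointNum a b‖ ^ 2 =
      (1 - ‖a‖ ^ 2 * ‖b‖ ^ 2) ^ 2 - ‖1 - a * conj b‖ ^ 2 * ((1 - ‖a‖ ^ 2) * (1 - ‖b‖ ^ 2)) := by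
  simp only [hypMidpointNum, Complex.sq_norm, normSq_apply, add_re, add_im, sub_re, sub_im,
    mul_re, mul_im, one_re, one_im, ofReal_re, ofReal_im, conj_re, conj_im]
  ring

theorem norm_mul_sub_hypMidpointNum_sq (a b : ℂ) {A s : ℝ}
    (hA : A ^ 2 = ‖1 - a * conj b‖ ^ 2) (hs : s ^ 2 = (1 - ‖a‖ ^ 2) * (1 - ‖b‖ ^ 2)) :
    ‖a * (1 - ‖a‖ ^ 2 * ‖b‖ ^ 2 + A * s : ℝ) - hypMidpointNum a b‖ ^ 2 =
      (1 - ‖a‖ ^ 2) * A * (A - s) * (1 - ‖a‖ ^ 2 * ‖b‖ ^ 2 + A * s) := by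
  linear_combination (norm := skip)
    (-(1 - ‖a‖ ^ 2) * (A * s + (1 - ‖a‖ ^ 2) * ‖b‖ ^ 2)) * hA + A ^ 2 * hs
  simp only [hypMidpointNum, Complex.sq_norm, normSq_apply, add_re, add_im, sub_re, sub_im,
    mul_re, mul_im, one_re, one_im, ofReal_re, ofReal_im, conj_re, conj_im]
  ring

theorem one_sub_norm_hypMidpointNum_div_sq (a b : ℂ) {A s : ℝ}
    (hA : A ^ 2 = ‖1 - a * conj b‖ ^ 2) (hs : s ^ 2 = (1 - ‖a‖ ^ 2) * (1 - ‖b‖ ^ 2))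
    (hD : 1 - ‖a‖ ^ 2 * ‖b‖ ^ 2 + A * s ≠ 0) :
    1 - ‖hypMidpointNum a b / ((1 - ‖a‖ ^ 2 * ‖b‖ ^ 2 + A * s : ℝ) : ℂ)‖ ^ 2 =
      2 * A * s / (1 - ‖a‖ ^ 2 * ‖b‖ ^ 2 + A * s) := by
  rw [norm_div, div_pow, norm_real, Real.norm_eq_abs, sq_abs, norm_hypMidpointNum_sq, ← hA, ← hs]
  field_simp
  ring

theorem norm_sub_hypMidpointNum_div_sq (a b : ℂ) {A s : ℝ}
    (hA : A ^ 2 = ‖1 - a * conj b‖ ^ 2) (hs : s ^ 2 = (1 - ‖a‖ ^ 2) * (1 - ‖b‖ ^ 2))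
    (hD : 1 - ‖a‖ ^ 2 * ‖b‖ ^ 2 + A * s ≠ 0) :
    ‖a - hypMidpointNum a b / ((1 - ‖a‖ ^ 2 * ‖b‖ ^ 2 + A * s : ℝ) : ℂ)‖ ^ 2 =
      (1 - ‖a‖ ^ 2) * A * (A - s) / (1 - ‖a‖ ^ 2 * ‖b‖ ^ 2 + A * s) := by
  rw [sub_div' (ofReal_ne_zero.2 hD), norm_div, div_pow, norm_real, Real.norm_eq_abs, sq_abs,
    norm_mul_sub_hypMidpointNum_sq a b hA hs]
  field_simp

noncomputable def hypMidpoint (a b : ℂ) : ℂ :=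
  hypMidpointNum a b /
    ((1 - ‖a‖ ^ 2 * ‖b‖ ^ 2 + ‖1 - a * conj b‖ * √((1 - ‖a‖ ^ 2) * (1 - ‖b‖ ^ 2)) : ℝ) : ℂ)

theorem hypMidpoint_comm (a b : ℂ) : hypMidpoint b a = hypMidpoint a b := by
  have h : ‖1 - b * conj a‖ = ‖1 - a * conj b‖ := by
    rw [← norm_conj, map_sub, map_one, map_mul, conj_conj, mul_comm]
  rw [hypMidpoint, hypMidpoint, hypMidpointNum, hypMidpointNum, h, add_comm,
    mul_comm (‖b‖ ^ 2), mul_comm (1 - ‖b‖ ^ 2)]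

section UnitDisk

variable {a b : ℂ}

theorem hypMidpoint_den_pos (ha : ‖a‖ < 1) (hb : ‖b‖ < 1) :
    0 < 1 - ‖a‖ ^ 2 * ‖b‖ ^ 2 + ‖1 - a * conj b‖ * √((1 - ‖a‖ ^ 2) * (1 - ‖b‖ ^ 2)) := by
  have hab : ‖a‖ ^ 2 * ‖b‖ ^ 2 < 1 :=
    mul_lt_one_of_nonneg_of_lt_one_left (by positivity)
      (pow_lt_one₀ (norm_nonneg a) ha two_ne_zero) (pow_le_one₀ (norm_nonneg b) hb.le)
  have hAs : 0 ≤ ‖1 - a * conj b‖ * √((1 - ‖a‖ ^ 2) * (1 - ‖b‖ ^ 2)) := by positivity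
  linarith

theorem norm_hypMidpoint_lt_one (ha : ‖a‖ < 1) (hb : ‖b‖ < 1) : ‖hypMidpoint a b‖ < 1 := by
  have hab := mul_pos (one_sub_norm_sq_pos ha) (one_sub_norm_sq_pos hb)
  have hs := Real.sqrt_pos.2 hab
  have hA := hs.trans_le (sqrt_le_norm_one_sub_mul_conj a b)
  have hD := hypMidpoint_den_pos ha hb
  have h := one_sub_norm_hypMidpointNum_div_sq a b rfl (Real.sq_sqrt hab.le) hD.ne'
  rw [← hypMidpoint] at h
  have hz : 0 < 1 - ‖hypMidpoint a b‖ ^ 2 := h ▸ by positivity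
  exact (sq_lt_one_iff₀ (norm_nonneg _)).1 (sub_pos.1 hz)

theorem sinh_sq_half_hypDist_hypMidpoint (ha : ‖a‖ < 1) (hb : ‖b‖ < 1) :
    Real.sinh (hypDist a (hypMidpoint a b) / 2) ^ 2 = Real.sinh (hypDist a b / 4) ^ 2 := by
  have hab := mul_pos (one_sub_norm_sq_pos ha) (one_sub_norm_sq_pos hb)
  have hD := (hypMidpoint_den_pos ha hb).ne'
  rw [sinh_sq_half_hypDist ha (norm_hypMidpoint_lt_one ha hb), hypMidpoint,
    norm_sub_hypMidpointNum_div_sq a b rfl (Real.sq_sqrt hab.le) hD,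
    one_sub_norm_hypMidpointNum_div_sq a b rfl (Real.sq_sqrt hab.le) hD,
    show hypDist a b / 4 = hypDist a b / 2 / 2 by ring, Real.sinh_sq_half, cosh_half_hypDist ha hb]
  have ha' := one_sub_norm_sq_pos ha
  have hs := Real.sqrt_pos.2 hab
  have hA := hs.trans_le (sqrt_le_norm_one_sub_mul_conj a b)
  field_simp

end UnitDisk

theorem hyperbolic_midpoint_formula_general (a b : ℂ)
    (ha : ‖a‖ < 1) (hb : ‖b‖ < 1) :
    let z := (b * (1 - (‖a‖ ^ 2 : ℝ)) + a * (1 - (‖b‖ ^ 2 : ℝ))) /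
      ((1 - ‖a‖ ^ 2 * ‖b‖ ^ 2
        + ‖1 - a * starRingEnd ℂ b‖ *
          Real.sqrt ((1 - ‖a‖ ^ 2) * (1 - ‖b‖ ^ 2)) : ℝ) : ℂ)
    ‖z‖ < 1 ∧
      ‖a - z‖ ^ 2 / ((1 - ‖a‖ ^ 2) * (1 - ‖z‖ ^ 2)) =
        ‖z - b‖ ^ 2 / ((1 - ‖z‖ ^ 2) * (1 - ‖b‖ ^ 2)) ∧
      hypDist a z = hypDist a b / 2 := by
  intro z
  have hz : ‖z‖ < 1 := norm_hypMidpoint_lt_one ha hb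
  have hleft : Real.sinh (hypDist a z / 2) ^ 2 = Real.sinh (hypDist a b / 4) ^ 2 :=
    sinh_sq_half_hypDist_hypMidpoint ha hb
  have hright : Real.sinh (hypDist z b / 2) ^ 2 = Real.sinh (hypDist a b / 4) ^ 2 := by
    have hz' : z = hypMidpoint b a := (hypMidpoint_comm a b).symm
    rw [hypDist_comm z, hz', hypDist_comm a]
    exact sinh_sq_half_hypDist_hypMidpoint hb ha
  refine ⟨hz, ?_, ?_⟩
  · rw [← sinh_sq_half_hypDist ha hz, ← sinh_sq_half_hypDist hz hb, hleft, hright]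
  · have haz := hypDist_nonneg a z
    have hab := hypDist_nonneg a b
    have h := Real.sinh_injective <| (sq_eq_sq₀ (Real.sinh_nonneg_iff.2 (by linarith))
      (Real.sinh_nonneg_iff.2 (by linarith))).1 hleft
    linarith

theorem hyperbolic_midpoint_formula (a b : ℂ)
    (ha : ‖a‖ < 1) (hb : ‖b‖ < 1) (hab : a ≠ b) :
    let z := (b * (1 - (‖a‖ ^ 2 : ℝ)) + a * (1 - (‖b‖ ^ 2 : ℝ))) /
      ((1 - ‖a‖ ^ 2 * ‖b‖ ^ 2
        + ‖1 - a * starRingEnd ℂ b‖ *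
          Real.sqrt ((1 - ‖a‖ ^ 2) * (1 - ‖b‖ ^ 2)) : ℝ) : ℂ)
    ‖z‖ < 1 ∧
      ‖a - z‖ ^ 2 / ((1 - ‖a‖ ^ 2) * (1 - ‖z‖ ^ 2)) =
        ‖z - b‖ ^ 2 / ((1 - ‖z‖ ^ 2) * (1 - ‖b‖ ^ 2)) ∧
      hypDist a z = hypDist a b / 2 :=
  hyperbolic_midpoint_formula_general a b ha hb
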